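/- arXiv:1303.6697 — 3 statements merged into one kernel-verified Lean document; each statement's English description precedes it below -/
import Mathlib

section
/- If c : X³ → ℕ is a reduced cocycle on a set X (i.e., c(x,x,y) = c(x,y,y) = 0 for all x,y and c(x,y,z) - c(w,y,z) + c(w,x,z) - c(w,x,y) = 0 for all w,x,y,z), then the relation x ≈ y defined by c(x,y,x) = 0 and c(y,x,y) = 0 is an equivalence relation on X. -/
/-- For a reduced cocycle `c : X³ → ℕ`, the relation
`x ≈ y ↔ c x y x = 0 ∧ c y x y = 0` is an equivalence relation on `X`. -/
theorem stmt_0 {X : Type*} (c : X → X → X → ℕ)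
    (hcocycle : ∀ w x y z : X,
      (c x y z : ℤ) - c w y z + c w x z - c w x y = 0)
    (hred₁ : ∀ x y : X, c x x y = 0)
    (hred₂ : ∀ x y : X, c x y y = 0) :
    Equivalence (fun x y : X => c x y x = 0 ∧ c y x y = 0) := by
  constructor
  · intro x
    exact ⟨hred₁ x x, hred₁ x x⟩
  · rintro x y ⟨h1, h2⟩
    exact ⟨h2, h1⟩
  · rintro x y z ⟨h1, h2⟩ ⟨h3, h4⟩
    have a1 := hcocycle x y z x
    have a2 := hcocycle x z y x
    have a3 := hcocycle y x z y
    have a4 := hcocycle y z x y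
    have a5 := hcocycle z x y z
    have a6 := hcocycle z y x z
    have a7 := hcocycle x y x z
    have a8 := hcocycle y x y z
    have a9 := hcocycle z x z y
    have a10 := hcocycle x z x y
    have a11 := hcocycle y z y x
    have a12 := hcocycle z y z x
    have b1 := hred₁ x y
    have b2 := hred₁ x z
    have b3 := hred₁ y z
    have b4 := hred₁ y x
    have b5 := hred₁ z x
    have b6 := hred₁ z y
    have d1 := hred₂ x y
    have d2 := hred₂ x z
    have d3 := hred₂ y z
    have d4 := hred₂ y x
    have d5 := hred₂ z x
    have d6 := hred₂ z y
    constructor <;> omega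
end

section
/- Two t^ℕ-categories over a discrete valuation ring R are isomorphic as R-categories if and only if their underlying cyclic posets (object sets with structure cocycles) are isomorphic, where an isomorphism of cyclic posets (X,c) ≅ (X',c') is a bijection x ↦ x' with c(x,y,z) = c'(x',y',z') for all x,y,z. -/
theorem eq_of_associated_pow_pow {M : Type*} [CommMonoidWithZero M] [IsCancelMulZero M] {t : M}
    (ht₀ : t ≠ 0) (ht : ¬IsUnit t) {a b : ℕ} (h : Associated (t ^ a) (t ^ b)) : a = b :=
  le_antisymm ((pow_dvd_pow_iff ht₀ ht).1 h.dvd) ((pow_dvd_pow_iff ht₀ ht).1 h.symm.dvd)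

/-- An `R`-category isomorphism is encoded by the bijection `φ` on objects and the units
`r x y` with `f_{xy} ↦ (r x y)·f_{φx,φy}`; it makes `t ^ c x y z` and
`t ^ c' (φ x) (φ y) (φ z)` associated. -/
theorem stmt_7_general {R : Type*} [CommRing R] [IsDomain R]
    (t : R) (ht : Irreducible t)
    {X X' : Type*} (c : X → X → X → ℕ) (c' : X' → X' → X' → ℕ) :
    (∃ (φ : X ≃ X') (r : X → X → Rˣ), (∀ x : X, r x x = 1) ∧
        ∀ x y z : X, (r y z : R) * (r x y : R) * t ^ c' (φ x) (φ y) (φ z) =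
          (r x z : R) * t ^ c x y z) ↔
    (∃ φ : X ≃ X', ∀ x y z : X, c x y z = c' (φ x) (φ y) (φ z)) := by
  constructor
  · rintro ⟨φ, r, -, hr⟩
    refine ⟨φ, fun x y z => (eq_of_associated_pow_pow ht.ne_zero ht.not_isUnit ?_).symm⟩
    rw [← associated_unit_mul_left_iff (u := r y z * r x y),
      ← associated_unit_mul_right_iff (u := r x z)]
    exact .of_eq (by rw [Units.val_mul, hr x y z])
  · rintro ⟨φ, hφ⟩
    exact ⟨φ, fun _ _ => 1, fun _ => rfl, fun x y z => by simp [hφ x y z]⟩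

/-- Two `t^ℕ`-categories over a DVR `R` (each determined by its
object set and structure cocycle, with hom-sets free rank-one `R`-modules on
generators `f_{xy}` and composition `f_{yz} ∘ f_{xy} = t^{c(x,y,z)} f_{xz}`)
are isomorphic as `R`-categories if and only if their underlying cyclic posets
are isomorphic.  An `R`-category isomorphism is encoded by the bijection `φ`
on objects and the units `r x y` with `f_{xy} ↦ (r x y)·f_{φx,φy}`, preserving
identities and composition. -/
theorem stmt_7 {R : Type*} [CommRing R] [IsDomain R] [IsDiscreteValuationRing R]
    (t : R) (ht : Irreducible t)
    {X X' : Type*} (c : X → X → X → ℕ) (c' : X' → X' → X' → ℕ)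
    (hc : ∀ w x y z : X, c x y z + c w x z = c w x y + c w y z)
    (hc₁ : ∀ x y : X, c x x y = 0) (hc₂ : ∀ x y : X, c x y y = 0)
    (hc' : ∀ w x y z : X', c' x y z + c' w x z = c' w x y + c' w y z)
    (hc'₁ : ∀ x y : X', c' x x y = 0) (hc'₂ : ∀ x y : X', c' x y y = 0) :
    (∃ (φ : X ≃ X') (r : X → X → Rˣ), (∀ x : X, r x x = 1) ∧
        ∀ x y z : X, (r y z : R) * (r x y : R) * t ^ c' (φ x) (φ y) (φ z) =
          (r x z : R) * t ^ c x y z) ↔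
    (∃ φ : X ≃ X', ∀ x y z : X, c x y z = c' (φ x) (φ y) (φ z)) :=
  stmt_7_general t ht c c'
end

section
/- Consider the set of chords {(a,b) ∈ ℤ² : a + 2 ≤ b}, modeling indecomposable objects of the cluster category of the ∞-gon. Suppose T is a collection of pairwise noncrossing chords that is maximal among noncrossing collections and contains, for some vertex x, chords (x, y_n) with y_n → ∞. If T also contains chords (z_n, x) with z_n → −∞ for every such x (the limit condition), then for any chord (a,b) ∈ T there is exactly one other chord (a',b') ≠ (a,b) such that (T \ {(a,b)}) ∪ {(a',b')} is again maximal noncrossing with the limit condition. -/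
/-- Chords `(a,b)` and `(c,d)` cross iff `a < c < b < d` or `c < a < d < b`. -/
def Crosses (p q : ℤ × ℤ) : Prop :=
  (p.1 < q.1 ∧ q.1 < p.2 ∧ p.2 < q.2) ∨ (q.1 < p.1 ∧ p.1 < q.2 ∧ q.2 < p.2)

/-- A chord of the `∞`-gon: a pair `(a,b)` of integers with `a + 2 ≤ b`. -/
def IsChord (p : ℤ × ℤ) : Prop := p.1 + 2 ≤ p.2

/-- `T` is a pairwise noncrossing set of chords of the `∞`-gon satisfying the
limit condition: if `T` contains chords `(x, yₙ)` with `yₙ → ∞` then it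
contains chords `(zₙ, x)` with `zₙ → -∞`, and symmetrically. -/
def GoodSet (T : Set (ℤ × ℤ)) : Prop :=
  (∀ p ∈ T, IsChord p) ∧
  (∀ p ∈ T, ∀ q ∈ T, ¬ Crosses p q) ∧
  (∀ x : ℤ, (∀ N : ℤ, ∃ y, N < y ∧ (x, y) ∈ T) →
    ∀ N : ℤ, ∃ z, z < N ∧ (z, x) ∈ T) ∧
  (∀ x : ℤ, (∀ N : ℤ, ∃ z, z < N ∧ (z, x) ∈ T) →
    ∀ N : ℤ, ∃ y, N < y ∧ (x, y) ∈ T)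

/-- A cluster: a `GoodSet` which is maximal among `GoodSet`s. -/
def IsCluster (T : Set (ℤ × ℤ)) : Prop :=
  GoodSet T ∧ ∀ T' : Set (ℤ × ℤ), GoodSet T' → T ⊆ T' → T' = T

/-! ### Auxiliary material -/

/-- Symmetric non-crossing of chords `(x,y)` and `(s,t)`, as plain arithmetic.
Definitionally, `NCa x y s t = ¬ Crosses (x,y) (s,t)`, and this is a symmetric relation. -/
def NCa (x y s t : ℤ) : Prop := ¬((x < s ∧ s < y ∧ y < t) ∨ (s < x ∧ x < t ∧ t < y))

lemma crosses_irrefl (r : ℤ × ℤ) : ¬ Crosses r r := by unfold Crosses; omega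

/-- Any chord noncrossing the four sides of the mutation quadrilateral (exterior
vertex `v` to the right) and noncrossing `(a,b)` also doesn't cross the diagonal `(m,v)`. -/
lemma key_v (a b m v s t : ℤ) (hab : a + 2 ≤ b) (h1 : a < m) (h2 : m < b) (h3 : b < v)
    (e1 : m = a + 1 ∨ NCa a m s t) (e2 : m = b - 1 ∨ NCa m b s t)
    (e3 : NCa a v s t) (e4 : v = b + 1 ∨ NCa b v s t)
    (hne : ¬(s = a ∧ t = b)) (hp : NCa a b s t) : NCa m v s t := by
  unfold NCa at *; omega

/-- Any chord crossing `(a,b)` but noncrossing the four sides of the mutation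
quadrilateral (exterior vertex `v > b`) must be the diagonal `(m,v)`. -/
lemma forced_v (a b m v s t : ℤ) (hab : a + 2 ≤ b) (h1 : a < m) (h2 : m < b) (h3 : b < v)
    (e1 : m = a + 1 ∨ NCa a m s t) (e2 : m = b - 1 ∨ NCa m b s t)
    (e3 : NCa a v s t) (e4 : v = b + 1 ∨ NCa b v s t)
    (hc : (a < s ∧ s < b ∧ b < t) ∨ (s < a ∧ a < t ∧ t < b)) : s = m ∧ t = v := by
  unfold NCa at *; omega

/-- Mirror of `key_v`: exterior vertex `u < a`. -/
lemma key_u (a b m u s t : ℤ) (hab : a + 2 ≤ b) (h1 : a < m) (h2 : m < b) (h3 : u < a)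
    (e1 : m = a + 1 ∨ NCa a m s t) (e2 : m = b - 1 ∨ NCa m b s t)
    (e3 : NCa u b s t) (e4 : u = a - 1 ∨ NCa u a s t)
    (hne : ¬(s = a ∧ t = b)) (hp : NCa a b s t) : NCa u m s t := by
  unfold NCa at *; omega

/-- Mirror of `forced_v`: exterior vertex `u < a`. -/
lemma forced_u (a b m u s t : ℤ) (hab : a + 2 ≤ b) (h1 : a < m) (h2 : m < b) (h3 : u < a)
    (e1 : m = a + 1 ∨ NCa a m s t) (e2 : m = b - 1 ∨ NCa m b s t)
    (e3 : NCa u b s t) (e4 : u = a - 1 ∨ NCa u a s t)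
    (hc : (a < s ∧ s < b ∧ b < t) ∨ (s < a ∧ a < t ∧ t < b)) : s = u ∧ t = m := by
  unfold NCa at *; omega

/-- In any cluster `T` of the `∞`-gon, every chord `p ∈ T` has
a unique mutation: there is exactly one chord `q ≠ p` such that
`(T \ {p}) ∪ {q}` is again a cluster. -/
theorem stmt_18 (T : Set (ℤ × ℤ)) (hT : IsCluster T) (p : ℤ × ℤ) (hp : p ∈ T) :
    ∃! q : ℤ × ℤ, q ≠ p ∧ IsCluster ((T \ {p}) ∪ {q}) := by
  obtain ⟨a, b⟩ := p
  obtain ⟨hgood, hmax⟩ := hT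
  have hchord : a + 2 ≤ b := hgood.1 _ hp
  have hNC : ∀ x y s t : ℤ, (x, y) ∈ T → (s, t) ∈ T → NCa x y s t :=
    fun x y s t h1 h2 => hgood.2.1 (x, y) h1 (s, t) h2
  have hsymNC : ∀ x y s t : ℤ, NCa x y s t → NCa s t x y := by
    intro x y s t h; unfold NCa at *; omega
  -- any chord noncrossing everything in `T` belongs to `T` (by maximality).
  have hmem : ∀ x y : ℤ, x + 2 ≤ y → (∀ c d : ℤ, (c, d) ∈ T → NCa c d x y) → (x, y) ∈ T := by
    intro x y hch h
    have hg2 : GoodSet (insert (x, y) T) := by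
      refine ⟨?_, ?_, ?_, ?_⟩
      · rintro r hr
        rw [Set.mem_insert_iff] at hr
        rcases hr with rfl | hr
        · exact hch
        · exact hgood.1 r hr
      · intro r hr s hs
        rw [Set.mem_insert_iff] at hr hs
        rcases hr with rfl | hr <;> rcases hs with rfl | hs
        · exact crosses_irrefl _
        · exact hsymNC _ _ _ _ (h s.1 s.2 hs)
        · exact h r.1 r.2 hr
        · exact hgood.2.1 r hr s hs
      · intro z hz N
        have hz' : ∀ M : ℤ, ∃ w, M < w ∧ (z, w) ∈ T := by
          intro M
          obtain ⟨w, hw1, hw2⟩ := hz (max M y)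
          rw [Set.mem_insert_iff] at hw2
          rcases hw2 with hw2 | hw2
          · exfalso
            have hwy : w = y := congrArg Prod.snd hw2
            have := le_max_right M y; omega
          · exact ⟨w, by have := le_max_left M y; omega, hw2⟩
        obtain ⟨w, hw1, hw2⟩ := hgood.2.2.1 z hz' N
        exact ⟨w, hw1, Set.mem_insert_iff.mpr (Or.inr hw2)⟩
      · intro z hz N
        have hz' : ∀ M : ℤ, ∃ w, w < M ∧ (w, z) ∈ T := by
          intro M
          obtain ⟨w, hw1, hw2⟩ := hz (min M x)
          rw [Set.mem_insert_iff] at hw2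
          rcases hw2 with hw2 | hw2
          · exfalso
            have hwx : w = x := congrArg Prod.fst hw2
            have := min_le_right M x; omega
          · exact ⟨w, by have := min_le_left M x; omega, hw2⟩
        obtain ⟨w, hw1, hw2⟩ := hgood.2.2.2 z hz' N
        exact ⟨w, hw1, Set.mem_insert_iff.mpr (Or.inr hw2)⟩
    have heq := hmax _ hg2 (Set.subset_insert _ _)
    rw [← heq]
    exact Set.mem_insert _ _
  -- the common endgame, given the diagonal `(q1, q2)` of the mutation quadrilateral.
  have main : ∀ q1 q2 : ℤ,
      q1 + 2 ≤ q2 →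
      ((a < q1 ∧ q1 < b ∧ b < q2) ∨ (q1 < a ∧ a < q2 ∧ q2 < b)) →
      (∀ s t : ℤ, (s, t) ∈ T → ¬(s = a ∧ t = b) → NCa q1 q2 s t) →
      (∀ s t : ℤ, (∀ c d : ℤ, (c, d) ∈ T → ¬(c = a ∧ d = b) → NCa c d s t) →
        ((a < s ∧ s < b ∧ b < t) ∨ (s < a ∧ a < t ∧ t < b)) → s = q1 ∧ t = q2) →
      ∃! q : ℤ × ℤ, q ≠ (a, b) ∧ IsCluster ((T \ {(a, b)}) ∪ {q}) := by
    intro q1 q2 hqch hqpat hqnc hqforced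
    have hqne : (q1, q2) ≠ (a, b) := by
      intro h
      rw [Prod.mk.injEq] at h
      omega
    have hTS : ∀ (S : Set (ℤ × ℤ)), (T \ {(a, b)}) ∪ {(q1, q2)} ⊆ S →
        ∀ c d : ℤ, (c, d) ∈ T → ¬(c = a ∧ d = b) → (c, d) ∈ S := by
      intro S hsub c d h hne
      apply hsub
      left
      refine ⟨h, ?_⟩
      intro hm
      rw [Set.mem_singleton_iff, Prod.mk.injEq] at hm
      exact hne hm
    refine ⟨(q1, q2), ⟨hqne, ⟨?_, ?_, ?_, ?_⟩, ?_⟩, ?_⟩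
    · -- chords
      rintro r (⟨hr, -⟩ | hr)
      · exact hgood.1 r hr
      · rw [Set.mem_singleton_iff] at hr; subst hr; exact hqch
    · -- pairwise noncrossing
      have key : ∀ r ∈ T \ {(a, b)}, ¬ Crosses (q1, q2) r ∧ ¬ Crosses r (q1, q2) := by
        rintro r ⟨hr, hr2⟩
        rw [Set.mem_singleton_iff] at hr2
        have hne : ¬(r.1 = a ∧ r.2 = b) := by
          intro h
          exact hr2 (Prod.ext_iff.mpr ⟨h.1, h.2⟩)
        have h := hqnc r.1 r.2 hr hne
        exact ⟨h, fun hc => h (hc.elim Or.inr Or.inl)⟩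
      rintro r (hr | hr) s (hs | hs)
      · exact hgood.2.1 r hr.1 s hs.1
      · rw [Set.mem_singleton_iff] at hs; subst hs; exact (key r hr).2
      · rw [Set.mem_singleton_iff] at hr; subst hr; exact (key s hs).1
      · rw [Set.mem_singleton_iff] at hr hs; subst hr
        rw [hs]; exact crosses_irrefl _
    · -- limit condition, part 1
      intro x hx N
      have hxT : ∀ M : ℤ, ∃ y, M < y ∧ (x, y) ∈ T := by
        intro M
        obtain ⟨y, hy1, hy2⟩ := hx (max M q2)
        rcases hy2 with ⟨hyT, -⟩ | hy2
        · exact ⟨y, by have := le_max_left M q2; omega, hyT⟩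
        · exfalso
          rw [Set.mem_singleton_iff] at hy2
          have : y = q2 := congrArg Prod.snd hy2
          have := le_max_right M q2; omega
      obtain ⟨z, hz1, hz2⟩ := hgood.2.2.1 x hxT (min N a)
      have hza : z < a := by have := min_le_right N a; omega
      refine ⟨z, by have := min_le_left N a; omega, Or.inl ⟨hz2, ?_⟩⟩
      intro h
      rw [Set.mem_singleton_iff, Prod.mk.injEq] at h
      omega
    · -- limit condition, part 2
      intro x hx N
      have hxT : ∀ M : ℤ, ∃ z, z < M ∧ (z, x) ∈ T := by
        intro M
        obtain ⟨z, hz1, hz2⟩ := hx (min M q1)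
        rcases hz2 with ⟨hzT, -⟩ | hz2
        · exact ⟨z, by have := min_le_left M q1; omega, hzT⟩
        · exfalso
          rw [Set.mem_singleton_iff] at hz2
          have : z = q1 := congrArg Prod.fst hz2
          have := min_le_right M q1; omega
      obtain ⟨y, hy1, hy2⟩ := hgood.2.2.2 x hxT (max N b)
      have hyb : b < y := by have := le_max_right N b; omega
      refine ⟨y, by have := le_max_left N b; omega, Or.inl ⟨hy2, ?_⟩⟩
      intro h
      rw [Set.mem_singleton_iff, Prod.mk.injEq] at h
      omega
    · -- maximality
      intro S hS hsub
      apply Set.Subset.antisymm _ hsub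
      intro r hr
      have hqS : (q1, q2) ∈ S := hsub (Or.inr rfl)
      by_cases hcp : (a < r.1 ∧ r.1 < b ∧ b < r.2) ∨ (r.1 < a ∧ a < r.2 ∧ r.2 < b)
      · have hfr := hqforced r.1 r.2
          (fun c d hcd hnecd => hS.2.1 (c, d) (hTS S hsub c d hcd hnecd) r hr) hcp
        right
        rw [Set.mem_singleton_iff]
        exact Prod.ext_iff.mpr ⟨hfr.1, hfr.2⟩
      · have hrT : (r.1, r.2) ∈ T := by
          apply hmem r.1 r.2 (hS.1 r hr)
          intro c d hcd
          by_cases h : c = a ∧ d = b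
          · obtain ⟨rfl, rfl⟩ := h
            exact hcp
          · exact hS.2.1 (c, d) (hTS S hsub c d hcd h) r hr
        have hrne : r ≠ (a, b) := by
          intro h
          exact hS.2.1 r hr (q1, q2) hqS (by rw [h]; exact hqpat)
        exact Or.inl ⟨hrT, fun hm => hrne (Set.mem_singleton_iff.mp hm)⟩
    · -- uniqueness
      rintro q' ⟨hne', hg', hmax'⟩
      have hq'mem : q' ∈ (T \ {(a, b)}) ∪ {q'} := Or.inr rfl
      have hTS' : ∀ c d : ℤ, (c, d) ∈ T → ¬(c = a ∧ d = b) →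
          (c, d) ∈ (T \ {(a, b)}) ∪ {q'} := by
        intro c d h hne
        left
        refine ⟨h, ?_⟩
        intro hm
        rw [Set.mem_singleton_iff, Prod.mk.injEq] at hm
        exact hne hm
      by_cases hq'T : q' ∈ T
      · exfalso
        have hsub2 : (T \ {(a, b)}) ∪ {q'} ⊆ T := by
          rintro r (⟨h, -⟩ | h)
          · exact h
          · rw [Set.mem_singleton_iff] at h; subst h; exact hq'T
        have heq := hmax' T hgood hsub2
        have hmem2 : (a, b) ∈ (T \ {(a, b)}) ∪ {q'} := heq ▸ hp
        rcases hmem2 with ⟨-, h⟩ | h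
        · exact h rfl
        · rw [Set.mem_singleton_iff] at h
          exact hne' h.symm
      · by_cases hcp' : (a < q'.1 ∧ q'.1 < b ∧ b < q'.2) ∨ (q'.1 < a ∧ a < q'.2 ∧ q'.2 < b)
        · have hfr := hqforced q'.1 q'.2
            (fun c d hcd hnecd => hg'.2.1 (c, d) (hTS' c d hcd hnecd) q' hq'mem) hcp'
          exact Prod.ext_iff.mpr ⟨hfr.1, hfr.2⟩
        · exfalso
          apply hq'T
          have : (q'.1, q'.2) ∈ T := by
            apply hmem q'.1 q'.2 (hg'.1 q' hq'mem)
            intro c d hcd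
            by_cases h : c = a ∧ d = b
            · obtain ⟨rfl, rfl⟩ := h
              exact hcp'
            · exact hg'.2.1 (c, d) (hTS' c d hcd h) q' hq'mem
          exact this
  -- interior vertex `m` of the mutation quadrilateral
  obtain ⟨m, ⟨hm1, hm2, hma⟩, hmmax⟩ :=
    Int.exists_greatest_of_bdd
      (P := fun m => a < m ∧ m < b ∧ (m = a + 1 ∨ (a, m) ∈ T))
      ⟨b, fun z hz => le_of_lt hz.2.1⟩
      ⟨a + 1, by omega, by omega, Or.inl rfl⟩
  have hmb : m = b - 1 ∨ (m, b) ∈ T := by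
    by_cases h : m = b - 1
    · exact Or.inl h
    right
    apply hmem m b (by omega)
    intro c d hcd
    have np := hNC a b c d hp hcd
    have h2 : m = a + 1 ∨ NCa a m c d := hma.imp id (fun hm => hNC a m c d hm hcd)
    have h3 : c ≠ a ∨ ¬(a < d) ∨ ¬(d < b) ∨ d ≤ m := by
      by_cases hc : c = a
      · by_cases hd1 : a < d
        · by_cases hd2 : d < b
          · refine Or.inr (Or.inr (Or.inr (hmmax d ⟨hd1, hd2, Or.inr ?_⟩)))
            rw [← hc]; exact hcd
          · exact Or.inr (Or.inr (Or.inl hd2))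
        · exact Or.inr (Or.inl hd1)
      · exact Or.inl hc
    unfold NCa at *; omega
  -- exterior vertex of the mutation quadrilateral
  by_cases hcove : ∃ c d : ℤ, (c, d) ∈ T ∧ c ≤ a ∧ b ≤ d ∧ ¬(c = a ∧ d = b)
  · -- a covering chord exists: take the innermost one.
    obtain ⟨c0, ⟨d0', hd0'T, hc0a, hbd0', hne0'⟩, hc0max⟩ :=
      Int.exists_greatest_of_bdd
        (P := fun c => ∃ d, (c, d) ∈ T ∧ c ≤ a ∧ b ≤ d ∧ ¬(c = a ∧ d = b))
        ⟨a, fun z hz => by obtain ⟨d, -, h2, -, -⟩ := hz; exact h2⟩ hcove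
    obtain ⟨d0, ⟨hd0T, hbd0, hne0⟩, hd0min⟩ :=
      Int.exists_least_of_bdd
        (P := fun d => (c0, d) ∈ T ∧ b ≤ d ∧ ¬(c0 = a ∧ d = b))
        ⟨b, fun z hz => hz.2.1⟩
        ⟨d0', hd0'T, hbd0', hne0'⟩
    by_cases hc0 : c0 = a
    · -- exterior vertex to the right: `v = d0 > b`.
      rw [hc0] at hd0T hne0 hd0min
      have hvb : b < d0 := by
        have : d0 ≠ b := fun h => hne0 ⟨rfl, h⟩
        omega
      have hav : (a, d0) ∈ T := hd0T
      have hbv : d0 = b + 1 ∨ (b, d0) ∈ T := by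
        by_cases h : d0 = b + 1
        · exact Or.inl h
        right
        apply hmem b d0 (by omega)
        intro s t hst
        have np := hNC a b s t hp hst
        have nav := hNC a d0 s t hav hst
        have hmin' : s ≠ a ∨ t < b ∨ t = b ∨ d0 ≤ t := by
          by_cases h1 : s = a
          · by_cases h2 : t = b
            · exact Or.inr (Or.inr (Or.inl h2))
            · by_cases h3 : b ≤ t
              · refine Or.inr (Or.inr (Or.inr (hd0min t ⟨?_, h3, fun hh => h2 hh.2⟩)))
                rw [← h1]; exact hst
              · exact Or.inr (Or.inl (by omega))
          · exact Or.inl h1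
        unfold NCa at *; omega
      exact main m d0 (by omega) (Or.inl ⟨hm1, hm2, hvb⟩)
        (fun s t hst hne => key_v a b m d0 s t hchord hm1 hm2 hvb
          (hma.imp id fun hh => hNC a m s t hh hst)
          (hmb.imp id fun hh => hNC m b s t hh hst)
          (hNC a d0 s t hav hst)
          (hbv.imp id fun hh => hNC b d0 s t hh hst)
          hne (hNC a b s t hp hst))
        (fun s t hsides hpat => forced_v a b m d0 s t hchord hm1 hm2 hvb
          (hma.imp id fun hh => hsides a m hh (by omega))
          (hmb.imp id fun hh => hsides m b hh (by omega))
          (hsides a d0 hav (by omega))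
          (hbv.imp id fun hh => hsides b d0 hh (by omega))
          hpat)
    · -- exterior vertex to the left: `u = c0 < a`.
      have hc0lt : c0 < a := lt_of_le_of_ne hc0a hc0
      have hd0b : d0 = b := by
        by_contra hdb
        have hd0gt : b < d0 := by omega
        have hadT : (a, d0) ∈ T := by
          apply hmem a d0 (by omega)
          intro s t hst
          have np := hNC a b s t hp hst
          have ncd := hNC c0 d0 s t hd0T hst
          have hcm : ¬(s ≤ a) ∨ ¬(b ≤ t) ∨ (s = a ∧ t = b) ∨ s ≤ c0 := by
            by_cases h1 : s ≤ a
            · by_cases h2 : b ≤ t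
              · by_cases h3 : s = a ∧ t = b
                · exact Or.inr (Or.inr (Or.inl h3))
                · exact Or.inr (Or.inr (Or.inr (hc0max s ⟨t, hst, h1, h2, h3⟩)))
              · exact Or.inr (Or.inl h2)
            · exact Or.inl h1
          have hdm : s ≠ c0 ∨ ¬(b ≤ t) ∨ d0 ≤ t := by
            by_cases h1 : s = c0
            · by_cases h2 : b ≤ t
              · refine Or.inr (Or.inr (hd0min t ⟨?_, h2, fun hh => by omega⟩))
                rw [← h1]; exact hst
              · exact Or.inr (Or.inl h2)
            · exact Or.inl h1
          unfold NCa at *; omega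
        have := hc0max a ⟨d0, hadT, le_rfl, by omega, fun hh => hdb hh.2⟩
        omega
      have hub : (c0, b) ∈ T := hd0b ▸ hd0T
      have hua : c0 = a - 1 ∨ (c0, a) ∈ T := by
        by_cases h : c0 = a - 1
        · exact Or.inl h
        right
        apply hmem c0 a (by omega)
        intro s t hst
        have np := hNC a b s t hp hst
        have nub := hNC c0 b s t hub hst
        have hcm : ¬(s ≤ a) ∨ ¬(b ≤ t) ∨ (s = a ∧ t = b) ∨ s ≤ c0 := by
          by_cases h1 : s ≤ a
          · by_cases h2 : b ≤ t
            · by_cases h3 : s = a ∧ t = b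
              · exact Or.inr (Or.inr (Or.inl h3))
              · exact Or.inr (Or.inr (Or.inr (hc0max s ⟨t, hst, h1, h2, h3⟩)))
            · exact Or.inr (Or.inl h2)
          · exact Or.inl h1
        unfold NCa at *; omega
      exact main c0 m (by omega) (Or.inr ⟨hc0lt, hm1, hm2⟩)
        (fun s t hst hne => key_u a b m c0 s t hchord hm1 hm2 hc0lt
          (hma.imp id fun hh => hNC a m s t hh hst)
          (hmb.imp id fun hh => hNC m b s t hh hst)
          (hNC c0 b s t hub hst)
          (hua.imp id fun hh => hNC c0 a s t hh hst)
          hne (hNC a b s t hp hst))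
        (fun s t hsides hpat => forced_u a b m c0 s t hchord hm1 hm2 hc0lt
          (hma.imp id fun hh => hsides a m hh (by omega))
          (hmb.imp id fun hh => hsides m b hh (by omega))
          (hsides c0 b hub (by omega))
          (hua.imp id fun hh => hsides c0 a hh (by omega))
          hpat)
  · -- no cover: contradiction with the limit condition.
    exfalso
    push_neg at hcove
    have nocov : ∀ c d : ℤ, (c, d) ∈ T → a < c ∨ d < b ∨ (c = a ∧ d = b) := by
      intro c d h
      by_cases h1 : c ≤ a
      · by_cases h2 : b ≤ d
        · exact Or.inr (Or.inr (hcove c d h h1 h2))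
        · exact Or.inr (Or.inl (by omega))
      · exact Or.inl (by omega)
    have step : ∀ f : ℤ, b + 1 ≤ f → ((b, f) ∈ T ∨ f = b + 1) → ∃ w, f < w ∧ (b, w) ∈ T := by
      intro f hf hbf
      have h1 : ∃ s t : ℤ, (s, t) ∈ T ∧ ¬ NCa s t a (f + 1) := by
        by_contra hno
        push_neg at hno
        have hmem1 : (a, f + 1) ∈ T := hmem a (f + 1) (by omega) hno
        have := nocov a (f + 1) hmem1
        omega
      obtain ⟨s, t, hst, hcr⟩ := h1
      have np := hNC a b s t hp hst
      have hnoc := nocov s t hst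
      have hft : (s = b ∧ f < t) ∨ (s = f ∧ f + 2 ≤ t) := by
        have hbf' : f = b + 1 ∨ NCa b f s t := by
          rcases hbf with h | h
          · exact Or.inr (hNC b f s t h hst)
          · exact Or.inl h
        unfold NCa at *; omega
      rcases hft with ⟨hsb, hft2⟩ | ⟨hsf, hft2⟩
      · refine ⟨t, hft2, ?_⟩
        rw [← hsb]; exact hst
      · rw [hsf] at hst
        have hbd : ∃ W : ℤ, ∀ w, (f, w) ∈ T → w ≤ W := by
          by_contra hW
          push_neg at hW
          have hfan : ∀ N : ℤ, ∃ y, N < y ∧ (f, y) ∈ T := by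
            intro N
            obtain ⟨w, h1, h2⟩ := hW N
            exact ⟨w, h2, h1⟩
          obtain ⟨z, hz1, hz2⟩ := hgood.2.2.1 f hfan a
          have := nocov z f hz2
          omega
        obtain ⟨W, hW⟩ := hbd
        obtain ⟨w, hwT, hwmax⟩ :=
          Int.exists_greatest_of_bdd (P := fun w => (f, w) ∈ T) ⟨W, hW⟩ ⟨t, hst⟩
        have hwt : t ≤ w := hwmax t hst
        have hbw : (b, w) ∈ T := by
          apply hmem b w (by omega)
          intro c d hcd
          have np' := hNC a b c d hp hcd
          have nfw := hNC f w c d hwT hcd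
          have hnoc' := nocov c d hcd
          have hmaxd : c ≠ f ∨ d ≤ w := by
            by_cases h : c = f
            · refine Or.inr (hwmax d ?_)
              rw [← h]; exact hcd
            · exact Or.inl h
          have hbf' : f = b + 1 ∨ NCa b f c d := by
            rcases hbf with h | h
            · exact Or.inr (hNC b f c d h hcd)
            · exact Or.inl h
          unfold NCa at *; omega
        exact ⟨w, by omega, hbw⟩
    have aux : ∀ n : ℕ, ∃ f : ℤ, b + 1 + n ≤ f ∧ ((b, f) ∈ T ∨ f = b + 1) := by
      intro n
      induction n with
      | zero => exact ⟨b + 1, by omega, Or.inr rfl⟩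
      | succ k ih =>
        obtain ⟨f, hf1, hf2⟩ := ih
        obtain ⟨w, hw1, hw2⟩ := step f (by omega) hf2
        exact ⟨w, by omega, Or.inl hw2⟩
    have hfanb : ∀ N : ℤ, ∃ y, N < y ∧ (b, y) ∈ T := by
      intro N
      obtain ⟨f, hf1, hf2⟩ := aux ((N + 1 - b).toNat + 1)
      have hN : N < f := by omega
      have hfb : f ≠ b + 1 := by omega
      rcases hf2 with h | h
      · exact ⟨f, hN, h⟩
      · exact absurd h hfb
    obtain ⟨z, hz1, hz2⟩ := hgood.2.2.1 b hfanb a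
    have := nocov z b hz2
    omega
end
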